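/- arXiv:1210.4949 — 5 statements merged into one kernel-verified Lean document; each statement's English description precedes it below -/
import Mathlib

section
/- Let n ≥ 1, let M be an n×n matrix over RatFunc ℂ, and let B and I be nonempty complementary subsets of the index set Fin n such that the matrix M_II - X • 1 is invertible over RatFunc ℂ. Then det(R(M;B) - X • 1) = det(M - X • 1) / det(M_II - X • 1), where R(M;B) = M_BB - M_BI * (M_II - X • 1)⁻¹ * M_IB is the isospectral reduction of M over B. -/
/-!
Listing the indices of `B` before those of `I = Bᶜ` puts `M - X • 1` in 2×2 block form whose
lower right block `M_II - X • 1` is invertible. The Schur complement of that block is exactly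
`R(M;B) - X • 1`, so the determinant formula for block matrices gives
`det (M - X • 1) = det (M_II - X • 1) * det (R(M;B) - X • 1)`.
-/

open Matrix

noncomputable def isoRed {n : ℕ} (M : Matrix (Fin n) (Fin n) (RatFunc ℂ))
    (B I : Finset (Fin n)) : Matrix ↥B ↥B (RatFunc ℂ) :=
  M.submatrix (Subtype.val : ↥B → Fin n) (Subtype.val : ↥B → Fin n) -
    M.submatrix (Subtype.val : ↥B → Fin n) (Subtype.val : ↥I → Fin n) *
      (M.submatrix (Subtype.val : ↥I → Fin n) (Subtype.val : ↥I → Fin n) -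
        (RatFunc.X : RatFunc ℂ) • 1)⁻¹ *
      M.submatrix (Subtype.val : ↥I → Fin n) (Subtype.val : ↥B → Fin n)

def Finset.sumComplEquiv {ι : Type*} [DecidableEq ι] [Fintype ι] (B : Finset ι) :
    ↥B ⊕ ↥Bᶜ ≃ ι :=
  (Equiv.sumCongr (Equiv.refl ↥B) (Equiv.subtypeEquivRight fun _ => Finset.mem_compl)).trans
    (Equiv.sumCompl (· ∈ B))

namespace Matrix

variable {ι κ κ' R : Type*}

theorem submatrix_sub_smul_one_of_injective [Ring R] [DecidableEq ι] [DecidableEq κ]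
    (A : Matrix ι ι R) (x : R) {e : κ → ι} (he : Function.Injective e) :
    (A - x • 1).submatrix e e = A.submatrix e e - x • 1 := by
  ext i j
  simp [one_apply, he.eq_iff]

theorem submatrix_sub_smul_one_of_ne [Ring R] [DecidableEq ι] (A : Matrix ι ι R) (x : R)
    {f : κ → ι} {g : κ' → ι} (hfg : ∀ i j, f i ≠ g j) :
    (A - x • 1).submatrix f g = A.submatrix f g := by
  ext i j
  simp [one_apply_ne (hfg i j)]

variable [CommRing R] [Fintype ι] [DecidableEq ι]

theorem det_eq_det_submatrix_compl_mul_det_schur (A : Matrix ι ι R) (B : Finset ι)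
    (hD : IsUnit (A.submatrix (Subtype.val : ↥Bᶜ → ι) (Subtype.val : ↥Bᶜ → ι))) :
    A.det = (A.submatrix (Subtype.val : ↥Bᶜ → ι) (Subtype.val : ↥Bᶜ → ι)).det *
      (A.submatrix (Subtype.val : ↥B → ι) (Subtype.val : ↥B → ι) -
        A.submatrix (Subtype.val : ↥B → ι) (Subtype.val : ↥Bᶜ → ι) *
          (A.submatrix (Subtype.val : ↥Bᶜ → ι) (Subtype.val : ↥Bᶜ → ι))⁻¹ *
            A.submatrix (Subtype.val : ↥Bᶜ → ι) (Subtype.val : ↥B → ι)).det := by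
  have := hD.invertible
  have hblocks : A.submatrix B.sumComplEquiv B.sumComplEquiv = fromBlocks
      (A.submatrix (↑) (↑)) (A.submatrix (↑) (↑)) (A.submatrix (↑) (↑)) (A.submatrix (↑) (↑)) := by
    ext (i | i) (j | j) <;> rfl
  rw [← det_submatrix_equiv_self B.sumComplEquiv, hblocks, det_fromBlocks₂₂, invOf_eq_nonsing_inv]

theorem det_sub_smul_one_eq_det_mul_det_schur (A : Matrix ι ι R) (x : R) (B : Finset ι)
    (hD : IsUnit (A.submatrix (Subtype.val : ↥Bᶜ → ι) (Subtype.val : ↥Bᶜ → ι) - x • 1)) :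
    (A - x • 1).det = (A.submatrix (Subtype.val : ↥Bᶜ → ι) (Subtype.val : ↥Bᶜ → ι) - x • 1).det *
      (A.submatrix (Subtype.val : ↥B → ι) (Subtype.val : ↥B → ι) - x • 1 -
        A.submatrix (Subtype.val : ↥B → ι) (Subtype.val : ↥Bᶜ → ι) *
          (A.submatrix (Subtype.val : ↥Bᶜ → ι) (Subtype.val : ↥Bᶜ → ι) - x • 1)⁻¹ *
            A.submatrix (Subtype.val : ↥Bᶜ → ι) (Subtype.val : ↥B → ι)).det := by
  have hBI (b : ↥B) (c : ↥Bᶜ) : (b : ι) ≠ c := fun h => Finset.mem_compl.1 c.2 (h ▸ b.2)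
  rw [← submatrix_sub_smul_one_of_injective A x Subtype.val_injective] at hD ⊢
  rw [← submatrix_sub_smul_one_of_injective A x Subtype.val_injective,
    ← submatrix_sub_smul_one_of_ne A x hBI,
    ← submatrix_sub_smul_one_of_ne A x fun c b => (hBI b c).symm]
  exact det_eq_det_submatrix_compl_mul_det_schur (A - x • 1) B hD

end Matrix

theorem det_isoRed_eq_det_div_det_general {n : ℕ}
    (M : Matrix (Fin n) (Fin n) (RatFunc ℂ)) (B I : Finset (Fin n))
    (hcompl : I = Bᶜ)
    (hinv : IsUnit (M.submatrix (Subtype.val : ↥I → Fin n) (Subtype.val : ↥I → Fin n) -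
      (RatFunc.X : RatFunc ℂ) • 1)) :
    (isoRed M B I - (RatFunc.X : RatFunc ℂ) • 1).det =
      (M - (RatFunc.X : RatFunc ℂ) • 1).det /
        (M.submatrix (Subtype.val : ↥I → Fin n) (Subtype.val : ↥I → Fin n) -
          (RatFunc.X : RatFunc ℂ) • 1).det := by
  subst hcompl
  rw [eq_div_iff ((isUnit_iff_isUnit_det _).1 hinv).ne_zero, mul_comm, isoRed, sub_right_comm]
  -- `exact` rather than `rw`: the `•` here is `RatFunc`'s own, only defeq to the `CommRing` one
  exact (det_sub_smul_one_eq_det_mul_det_schur M _ B hinv).symm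

theorem det_isoRed_eq_det_div_det {n : ℕ} (hn : 1 ≤ n)
    (M : Matrix (Fin n) (Fin n) (RatFunc ℂ)) (B I : Finset (Fin n))
    (hB : B.Nonempty) (hI : I.Nonempty) (hcompl : I = Bᶜ)
    (hinv : IsUnit (M.submatrix (Subtype.val : ↥I → Fin n) (Subtype.val : ↥I → Fin n) -
      (RatFunc.X : RatFunc ℂ) • 1)) :
    (isoRed M B I - (RatFunc.X : RatFunc ℂ) • 1).det =
      (M - (RatFunc.X : RatFunc ℂ) • 1).det /
        (M.submatrix (Subtype.val : ↥I → Fin n) (Subtype.val : ↥I → Fin n) -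
          (RatFunc.X : RatFunc ℂ) • 1).det :=
  det_isoRed_eq_det_div_det_general M B I hcompl hinv
end

section
/- Let n ≥ 1, let M be an n×n matrix over ℂ, and let B and I be nonempty complementary subsets of Fin n. Let M' := M.map (RatFunc.C) be M viewed as a matrix over RatFunc ℂ. Then M'_II - X • 1 is invertible over RatFunc ℂ, and as multisets of complex numbers σ(R(M';B)) = σ(M') - σ(M'_II) and σ⁻¹(R(M';B)) = σ(M'_II) - σ(M'), where - is truncated multiset subtraction. -/
set_option synthInstance.maxHeartbeats 1000000
set_option maxHeartbeats 1000000

open Matrix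

/-- The spectrum of a matrix over `RatFunc ℂ`: the multiset of complex roots of the
numerator of `det (M - X•1)`. -/
noncomputable def spec {α : Type} [Fintype α] [DecidableEq α]
    (M : Matrix α α (RatFunc ℂ)) : Multiset ℂ :=
  ((M - (RatFunc.X : RatFunc ℂ) • 1).det).num.roots

/-- The inverse spectrum of a matrix over `RatFunc ℂ`: the multiset of complex roots of the
denominator of `det (M - X•1)`. -/
noncomputable def invSpec {α : Type} [Fintype α] [DecidableEq α]
    (M : Matrix α α (RatFunc ℂ)) : Multiset ℂ :=
  ((M - (RatFunc.X : RatFunc ℂ) • 1).det).denom.roots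

/-!
`M'_II - X • 1` is the image of `-charmatrix M_II`, so its determinant is `±χ(M_II)`, a nonzero
polynomial, and the block is invertible. The Schur complement formula
`det (M' - X • 1) = det (M'_II - X • 1) * det (R(M';B) - X • 1)` then exhibits
`det (R(M';B) - X • 1)` as the quotient `±χ(M) / ±χ(M_II)`. Writing a quotient `p / q` of nonzero
polynomials in lowest terms cancels the common roots: since numerator and denominator are coprime,
no root survives in both, so the numerator has roots `p.roots - q.roots` and the denominator
`q.roots - p.roots`.
-/

open Polynomial

section RatFuncRoots

variable {K : Type*} [Field K]

theorem RatFunc.rootMultiplicity_num_eq_zero_or_denom (f : RatFunc K) (a : K) :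
    f.num.rootMultiplicity a = 0 ∨ f.denom.rootMultiplicity a = 0 := by
  rcases aeval_ne_zero_of_isCoprime f.isCoprime_num_denom a with h | h
  · exact .inl (rootMultiplicity_eq_zero (by simpa using h))
  · exact .inr (rootMultiplicity_eq_zero (by simpa using h))

theorem RatFunc.rootMultiplicity_num_denom_div_algebraMap {p q : K[X]} (hp : p ≠ 0)
    (hq : q ≠ 0) (a : K) :
    (algebraMap K[X] (RatFunc K) p / algebraMap K[X] (RatFunc K) q).num.rootMultiplicity a =
        p.rootMultiplicity a - q.rootMultiplicity a ∧
      (algebraMap K[X] (RatFunc K) p / algebraMap K[X] (RatFunc K) q).denom.rootMultiplicity a =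
        q.rootMultiplicity a - p.rootMultiplicity a := by
  set f := algebraMap K[X] (RatFunc K) p / algebraMap K[X] (RatFunc K) q
  have hf : f ≠ 0 := div_ne_zero (algebraMap_ne_zero hp) (algebraMap_ne_zero hq)
  have hcross : f.num * q = p * f.denom := (num_mul_eq_mul_denom_iff hq).2 rfl
  have hmul := congrArg (rootMultiplicity a) hcross
  rw [rootMultiplicity_mul (mul_ne_zero (num_ne_zero hf) hq),
    rootMultiplicity_mul (mul_ne_zero hp f.denom_ne_zero)] at hmul
  rcases f.rootMultiplicity_num_eq_zero_or_denom a with h | h <;> omega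

theorem RatFunc.roots_num_div_algebraMap [DecidableEq K] {p q : K[X]} (hp : p ≠ 0)
    (hq : q ≠ 0) :
    (algebraMap K[X] (RatFunc K) p / algebraMap K[X] (RatFunc K) q).num.roots =
      p.roots - q.roots := by
  ext a
  rw [Multiset.count_sub, count_roots, count_roots, count_roots,
    (rootMultiplicity_num_denom_div_algebraMap hp hq a).1]

theorem RatFunc.roots_denom_div_algebraMap [DecidableEq K] {p q : K[X]} (hp : p ≠ 0)
    (hq : q ≠ 0) :
    (algebraMap K[X] (RatFunc K) p / algebraMap K[X] (RatFunc K) q).denom.roots =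
      q.roots - p.roots := by
  ext a
  rw [Multiset.count_sub, count_roots, count_roots, count_roots,
    (rootMultiplicity_num_denom_div_algebraMap hp hq a).2]

theorem Polynomial.roots_neg_one_pow_mul (p : K[X]) (k : ℕ) :
    ((-1) ^ k * p).roots = p.roots := by
  rcases neg_one_pow_eq_or K[X] k with h | h <;> simp [h, roots_neg]

end RatFuncRoots

section Determinants

variable {α R : Type*} [Fintype α] [DecidableEq α] [CommRing R]

theorem Matrix.det_map_C_sub_X_smul_one {K : Type*} [Field K] (N : Matrix α α K) :
    (N.map (RatFunc.C : K →+* RatFunc K) - (RatFunc.X : RatFunc K) • 1).det =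
      algebraMap K[X] (RatFunc K) ((-1) ^ Fintype.card α * N.charpoly) := by
  have h : N.map (RatFunc.C : K →+* RatFunc K) - (RatFunc.X : RatFunc K) • 1 =
      -(algebraMap K[X] (RatFunc K)).mapMatrix (charmatrix N) := by
    ext i j
    by_cases hij : i = j <;> simp [hij, RatFunc.algebraMap_C, RatFunc.algebraMap_X]
  rw [h, det_neg, ← RingHom.map_det, charpoly, map_mul, map_pow, map_neg, map_one]

theorem Matrix.neg_one_pow_mul_charpoly_ne_zero [Nontrivial R] (N : Matrix α α R) :
    (-1) ^ Fintype.card α * N.charpoly ≠ 0 :=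
  ((isUnit_one.neg.pow _).mul_right_eq_zero).not.2 N.charpoly_monic.ne_zero

theorem Matrix.isUnit_det_map_C_sub_X_smul_one {K : Type*} [Field K] (N : Matrix α α K) :
    IsUnit (N.map (RatFunc.C : K →+* RatFunc K) - (RatFunc.X : RatFunc K) • 1).det := by
  rw [det_map_C_sub_X_smul_one, isUnit_iff_ne_zero]
  exact RatFunc.algebraMap_ne_zero N.neg_one_pow_mul_charpoly_ne_zero

theorem Matrix.det_eq_det_submatrix_compl_mul_det_schur_s2 (A : Matrix α α R) (B : Finset α)
    (hD : IsUnit (A.submatrix (Subtype.val : ↥Bᶜ → α) (Subtype.val : ↥Bᶜ → α)).det) :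
    A.det = (A.submatrix (Subtype.val : ↥Bᶜ → α) (Subtype.val : ↥Bᶜ → α)).det *
      (A.submatrix (Subtype.val : ↥B → α) (Subtype.val : ↥B → α) -
        A.submatrix (Subtype.val : ↥B → α) (Subtype.val : ↥Bᶜ → α) *
          (A.submatrix (Subtype.val : ↥Bᶜ → α) (Subtype.val : ↥Bᶜ → α))⁻¹ *
          A.submatrix (Subtype.val : ↥Bᶜ → α) (Subtype.val : ↥B → α)).det := by
  let e : ↥B ⊕ ↥Bᶜ ≃ α :=
    (Equiv.sumCongr (Equiv.refl ↥B) (Equiv.subtypeEquivRight fun _ => Finset.mem_compl)).trans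
      (Equiv.sumCompl (· ∈ B))
  have hblocks : A.submatrix e e = fromBlocks (A.submatrix Subtype.val Subtype.val)
      (A.submatrix Subtype.val Subtype.val) (A.submatrix Subtype.val Subtype.val)
      (A.submatrix Subtype.val Subtype.val) := by
    ext (i | i) (j | j) <;> rfl
  have := invertibleOfIsUnitDet _ hD
  rw [← det_submatrix_equiv_self e, hblocks, det_fromBlocks₂₂, invOf_eq_nonsing_inv]

omit [Fintype α] in
theorem Matrix.submatrix_sub_smul_one {β : Type*} [DecidableEq β] (A : Matrix α α R) (t : R)
    {v : β → α} (hv : Function.Injective v) :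
    (A - t • 1).submatrix v v = A.submatrix v v - t • 1 := by
  change A.submatrix v v - t • (1 : Matrix α α R).submatrix v v = _
  rw [submatrix_one v hv]

omit [Fintype α] in
theorem Matrix.submatrix_sub_smul_one_of_ne_s2 {β γ : Type*} (A : Matrix α α R) (t : R)
    {v : β → α} {w : γ → α} (hvw : ∀ i j, v i ≠ w j) :
    (A - t • 1).submatrix v w = A.submatrix v w := by
  ext i j
  simp [one_apply_ne (hvw i j)]

theorem Matrix.det_sub_smul_one_eq_mul_det_schur (A : Matrix α α R) (t : R) (B : Finset α)
    (hD : IsUnit (A.submatrix (Subtype.val : ↥Bᶜ → α) (Subtype.val : ↥Bᶜ → α) - t • 1).det) :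
    (A - t • 1).det =
      (A.submatrix (Subtype.val : ↥Bᶜ → α) (Subtype.val : ↥Bᶜ → α) - t • 1).det *
      (A.submatrix (Subtype.val : ↥B → α) (Subtype.val : ↥B → α) -
        A.submatrix (Subtype.val : ↥B → α) (Subtype.val : ↥Bᶜ → α) *
          (A.submatrix (Subtype.val : ↥Bᶜ → α) (Subtype.val : ↥Bᶜ → α) - t • 1)⁻¹ *
          A.submatrix (Subtype.val : ↥Bᶜ → α) (Subtype.val : ↥B → α) - t • 1).det := by
  have hne : ∀ (i : ↥B) (j : ↥Bᶜ), (i : α) ≠ j := fun i j h =>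
    Finset.mem_compl.1 j.2 (h ▸ i.2)
  rw [← submatrix_sub_smul_one A t Subtype.val_injective] at hD ⊢
  rw [det_eq_det_submatrix_compl_mul_det_schur_s2 _ B hD,
    submatrix_sub_smul_one _ _ Subtype.val_injective,
    submatrix_sub_smul_one _ _ Subtype.val_injective, submatrix_sub_smul_one_of_ne_s2 _ _ hne,
    submatrix_sub_smul_one_of_ne_s2 _ _ fun i j h => hne j i h.symm, sub_right_comm]

end Determinants

theorem spec_map_C {α : Type} [Fintype α] [DecidableEq α] (N : Matrix α α ℂ) :
    spec (N.map (RatFunc.C : ℂ →+* RatFunc ℂ)) = N.charpoly.roots := by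
  rw [spec, det_map_C_sub_X_smul_one, RatFunc.num_algebraMap, roots_neg_one_pow_mul]

theorem det_sub_X_smul_one_eq_mul_det_isoRed {n : ℕ} (M : Matrix (Fin n) (Fin n) (RatFunc ℂ))
    (B : Finset (Fin n))
    (hD : IsUnit (M.submatrix (Subtype.val : ↥Bᶜ → Fin n) (Subtype.val : ↥Bᶜ → Fin n) -
      (RatFunc.X : RatFunc ℂ) • 1).det) :
    (M - (RatFunc.X : RatFunc ℂ) • 1).det =
      (M.submatrix (Subtype.val : ↥Bᶜ → Fin n) (Subtype.val : ↥Bᶜ → Fin n) -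
        (RatFunc.X : RatFunc ℂ) • 1).det * (isoRed M B Bᶜ - (RatFunc.X : RatFunc ℂ) • 1).det :=
  det_sub_smul_one_eq_mul_det_schur M _ B hD

theorem spec_invSpec_isoRed_of_complexMatrix_general {n : ℕ}
    (M : Matrix (Fin n) (Fin n) ℂ) (B I : Finset (Fin n))
    (hcompl : I = Bᶜ) :
    IsUnit ((M.map (RatFunc.C : ℂ →+* RatFunc ℂ)).submatrix
        (Subtype.val : ↥I → Fin n) (Subtype.val : ↥I → Fin n) -
        (RatFunc.X : RatFunc ℂ) • 1) ∧
    spec (isoRed (M.map (RatFunc.C : ℂ →+* RatFunc ℂ)) B I) =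
      spec (M.map (RatFunc.C : ℂ →+* RatFunc ℂ)) -
        spec ((M.map (RatFunc.C : ℂ →+* RatFunc ℂ)).submatrix
          (Subtype.val : ↥I → Fin n) (Subtype.val : ↥I → Fin n)) ∧
    invSpec (isoRed (M.map (RatFunc.C : ℂ →+* RatFunc ℂ)) B I) =
      spec ((M.map (RatFunc.C : ℂ →+* RatFunc ℂ)).submatrix
          (Subtype.val : ↥I → Fin n) (Subtype.val : ↥I → Fin n)) -
        spec (M.map (RatFunc.C : ℂ →+* RatFunc ℂ)) := by
  subst hcompl
  set MI := M.submatrix (Subtype.val : ↥Bᶜ → Fin n) (Subtype.val : ↥Bᶜ → Fin n)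
  have hsub : (M.map (RatFunc.C : ℂ →+* RatFunc ℂ)).submatrix (Subtype.val : ↥Bᶜ → Fin n)
      (Subtype.val : ↥Bᶜ → Fin n) = MI.map RatFunc.C := rfl
  have hunit := isUnit_det_map_C_sub_X_smul_one MI
  have hp := M.neg_one_pow_mul_charpoly_ne_zero
  have hq := MI.neg_one_pow_mul_charpoly_ne_zero
  have hred : (isoRed (M.map RatFunc.C) B Bᶜ - (RatFunc.X : RatFunc ℂ) • 1).det =
      algebraMap ℂ[X] (RatFunc ℂ) ((-1) ^ Fintype.card (Fin n) * M.charpoly) /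
        algebraMap ℂ[X] (RatFunc ℂ) ((-1) ^ Fintype.card ↥Bᶜ * MI.charpoly) := by
    rw [eq_div_iff (RatFunc.algebraMap_ne_zero hq), ← det_map_C_sub_X_smul_one,
      ← det_map_C_sub_X_smul_one, det_sub_X_smul_one_eq_mul_det_isoRed _ B (hsub ▸ hunit), hsub,
      mul_comm]
  refine ⟨hsub ▸ (isUnit_iff_isUnit_det _).2 hunit, ?_, ?_⟩
  · rw [spec, hred, RatFunc.roots_num_div_algebraMap hp hq, hsub, spec_map_C, spec_map_C,
      roots_neg_one_pow_mul, roots_neg_one_pow_mul]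
  · rw [invSpec, hred, RatFunc.roots_denom_div_algebraMap hp hq, hsub, spec_map_C, spec_map_C,
      roots_neg_one_pow_mul, roots_neg_one_pow_mul]

theorem spec_invSpec_isoRed_of_complexMatrix {n : ℕ} (hn : 1 ≤ n)
    (M : Matrix (Fin n) (Fin n) ℂ) (B I : Finset (Fin n))
    (hB : B.Nonempty) (hI : I.Nonempty) (hcompl : I = Bᶜ) :
    IsUnit ((M.map (RatFunc.C : ℂ →+* RatFunc ℂ)).submatrix
        (Subtype.val : ↥I → Fin n) (Subtype.val : ↥I → Fin n) -
        (RatFunc.X : RatFunc ℂ) • 1) ∧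
    spec (isoRed (M.map (RatFunc.C : ℂ →+* RatFunc ℂ)) B I) =
      spec (M.map (RatFunc.C : ℂ →+* RatFunc ℂ)) -
        spec ((M.map (RatFunc.C : ℂ →+* RatFunc ℂ)).submatrix
          (Subtype.val : ↥I → Fin n) (Subtype.val : ↥I → Fin n)) ∧
    invSpec (isoRed (M.map (RatFunc.C : ℂ →+* RatFunc ℂ)) B I) =
      spec ((M.map (RatFunc.C : ℂ →+* RatFunc ℂ)).submatrix
          (Subtype.val : ↥I → Fin n) (Subtype.val : ↥I → Fin n)) -
        spec (M.map (RatFunc.C : ℂ →+* RatFunc ℂ)) :=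
  spec_invSpec_isoRed_of_complexMatrix_general M B I hcompl
end

section
/- Let M be an n×n matrix over RatFunc ℂ all of whose entries have intDegree ≤ 0. Then det(M - X • 1) ≠ 0 and (det (M - X • 1)).intDegree = n. -/
/-!
The valuation at infinity `v f = exp f.intDegree` on `ℂ(X)` is non-archimedean, and the entries
of `M` satisfy `v (M i j) ≤ 1 < v X`. Hence in the Leibniz expansion of `det (M - X • 1)` the
diagonal term has valuation `v X ^ n` while every other term misses at least one diagonal
factor and has strictly smaller valuation, so `v (det (M - X • 1)) = exp n`.
-/

open Finset Equiv

theorem Finset.prod_lt_prod_of_ne_zero {ι Γ₀ : Type*} [LinearOrderedCommGroupWithZero Γ₀]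
    {s : Finset ι} {f g : ι → Γ₀} (hg : ∀ i ∈ s, g i ≠ 0) (hle : ∀ i ∈ s, f i ≤ g i)
    (hlt : ∃ i ∈ s, f i < g i) : ∏ i ∈ s, f i < ∏ i ∈ s, g i := by
  classical
  obtain ⟨i, hi, hilt⟩ := hlt
  rw [← mul_prod_erase s f hi, ← mul_prod_erase s g hi]
  refine mul_lt_mul_of_lt_of_le_of_nonneg_of_pos hilt ?_ zero_le ?_
  · exact prod_le_prod' fun j hj => hle j (mem_of_mem_erase hj)
  · exact zero_lt_iff.mpr (prod_ne_zero_iff.mpr fun j hj => hg j (mem_of_mem_erase hj))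

namespace Valuation

variable {R Γ₀ : Type*} [CommRing R] [LinearOrderedCommGroupWithZero Γ₀] (v : Valuation R Γ₀)

theorem map_units_int_smul (u : ℤˣ) (x : R) : v (u • x) = v x := by
  rcases Int.units_eq_one_or u with rfl | rfl <;> simp

variable {ι : Type*}

theorem map_diag_ne_zero [Nontrivial ι] {A : Matrix ι ι R}
    (h : ∀ i j, i ≠ j → v (A i j) < v (A j j)) (j : ι) : v (A j j) ≠ 0 := by
  obtain ⟨k, hk⟩ := exists_ne j
  exact (zero_le.trans_lt (h k j hk)).ne'

variable [Fintype ι]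

theorem map_prod_perm_lt_map_prod_diag {A : Matrix ι ι R}
    (h : ∀ i j, i ≠ j → v (A i j) < v (A j j)) {σ : Perm ι} (hσ : σ ≠ 1) :
    v (∏ i, A (σ i) i) < v (∏ i, A i i) := by
  obtain ⟨i₀, hi₀⟩ : ∃ i, σ i ≠ i := by
    by_contra! hfix
    exact hσ (Equiv.ext hfix)
  have : Nontrivial ι := ⟨⟨σ i₀, i₀, hi₀⟩⟩
  rw [map_prod, map_prod]
  refine prod_lt_prod_of_ne_zero (fun j _ => v.map_diag_ne_zero h j) (fun j _ => ?_)
    ⟨i₀, mem_univ _, h _ _ hi₀⟩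
  by_cases hj : σ j = j
  · rw [hj]
  · exact (h _ _ hj).le

variable [DecidableEq ι]

theorem map_det_eq_map_prod_diag {A : Matrix ι ι R}
    (h : ∀ i j, i ≠ j → v (A i j) < v (A j j)) :
    v A.det = v (∏ i, A i i) := by
  rcases subsingleton_or_nontrivial ι with hι | hι
  · have hA : A = Matrix.diagonal fun i => A i i := by
      ext i j
      rw [Subsingleton.elim i j, Matrix.diagonal_apply_eq]
    rw [hA, Matrix.det_diagonal]
    simp only [Matrix.diagonal_apply_eq]
  rw [Matrix.det_apply, ← add_sum_erase _ _ (mem_univ 1), map_add_eq_of_lt_left] <;>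
    simp only [Perm.sign_one, one_smul, Perm.one_apply]
  refine map_sum_lt _ ?_ fun σ hσ => ?_
  · rw [map_prod]
    exact prod_ne_zero_iff.mpr fun j _ => v.map_diag_ne_zero h j
  · rw [map_units_int_smul]
    exact v.map_prod_perm_lt_map_prod_diag h (ne_of_mem_erase hσ)

theorem map_det_sub_smul_one {M : Matrix ι ι R} {x : R} (h : ∀ i j, v (M i j) < v x) :
    v (M - x • 1).det = v x ^ Fintype.card ι := by
  have hdiag : ∀ i, v ((M - x • 1) i i) = v x := fun i => by
    simpa using v.map_sub_eq_of_lt_right (h i i)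
  rw [v.map_det_eq_map_prod_diag, map_prod]
  · rw [prod_congr rfl fun i _ => hdiag i, prod_const, card_univ]
  · intro i j hij
    rw [hdiag]
    simpa [hij] using h i j

end Valuation

theorem RatFunc.inftyValuation_lt_inftyValuation_X {F : Type*} [Field F]
    [DecidableEq (RatFunc F)] {f : RatFunc F} (hf : f.intDegree ≤ 0) : inftyValuation F f < inftyValuation F X := by
  rw [inftyValuation.X]
  by_cases h0 : f = 0
  · simp [h0]
  · rw [inftyValuation_apply, inftyValuation_of_nonzero F h0, WithZero.exp_lt_exp]
    omega

theorem det_sub_X_smul_one_ne_zero_and_intDegree_eq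
    {n : ℕ} (M : Matrix (Fin n) (Fin n) (RatFunc ℂ))
    (hdeg : ∀ i j, (M i j).intDegree ≤ 0) :
    (M - (RatFunc.X : RatFunc ℂ) • 1).det ≠ 0 ∧
    ((M - (RatFunc.X : RatFunc ℂ) • 1).det).intDegree = (n : ℤ) := by
  classical
  have hv := (RatFunc.inftyValuation ℂ).map_det_sub_smul_one fun i j =>
    RatFunc.inftyValuation_lt_inftyValuation_X (hdeg i j)
  rw [RatFunc.inftyValuation.X, Fintype.card_fin, ← WithZero.exp_nsmul, nsmul_one] at hv
  have hne : (M - (RatFunc.X : RatFunc ℂ) • 1).det ≠ 0 := by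
    intro h
    rw [h, map_zero] at hv
    exact WithZero.exp_ne_zero hv.symm
  refine ⟨hne, ?_⟩
  rwa [RatFunc.inftyValuation_apply, RatFunc.inftyValuation_of_nonzero ℂ hne,
    WithZero.exp_inj] at hv
end

section
/- Let M be an n×n matrix over RatFunc ℂ all of whose entries have intDegree ≤ 0. Then M - X • 1 is invertible as a matrix over RatFunc ℂ, and every entry of (M - X • 1)⁻¹ has intDegree ≤ 0. In particular the spectral inverse S(M) := (M - X • 1)⁻¹ + X • 1 exists. -/
/-! `w.intDegree ≤ 0` says that `w` lies in the valuation ring of the place at infinity `v`,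
and `v X > 1`. Write `M - X • 1 = (-X) • N` with `N = 1 - X⁻¹ • M`: the diagonal entries of `N`
have valuation `1` and the off-diagonal ones valuation `< 1`, so the identity term strictly
dominates the Leibniz expansion of `det N` and `v (det N) = 1`. Then `N⁻¹ = (det N)⁻¹ • adj N`
has integral entries because the adjugate of an integral matrix is integral, and
`(M - X • 1)⁻¹ = (-X)⁻¹ • N⁻¹` even has entries of valuation `≤ (v X)⁻¹`. -/

open Matrix

namespace Valuation

section CommRing

variable {R Γ₀ : Type*} [CommRing R] [LinearOrderedCommGroupWithZero Γ₀] (v : Valuation R Γ₀)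
  {n : Type*} [Fintype n] [DecidableEq n] {N : Matrix n n R}

theorem map_adjugate_apply_le_one (hN : ∀ i j, v (N i j) ≤ 1) (i j : n) :
    v (N.adjugate i j) ≤ 1 := by
  let N' : Matrix n n v.integer := fun i j => ⟨N i j, hN i j⟩
  have hN' : N = v.integer.subtype.mapMatrix N' := rfl
  rw [hN', ← RingHom.map_adjugate]
  exact (N'.adjugate i j).2

theorem map_det_eq_one (hdiag : ∀ i, v (N i i) = 1) (hoff : ∀ i j, i ≠ j → v (N i j) < 1) :
    v N.det = 1 := by
  have hsign (σ : Equiv.Perm n) (x : R) : v (σ.sign • x) = v x := by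
    rcases Int.units_eq_one_or σ.sign with h | h <;> simp [h]
  have hid : v (∏ i, N i i) = 1 := by simp [map_prod, hdiag]
  rw [det_apply, v.map_sum_eq_of_lt (Finset.mem_univ 1)]
  · simpa [hsign] using hid
  intro σ hσ
  obtain ⟨i, hi⟩ : ∃ i, σ i ≠ i := by
    by_contra! h
    exact (Finset.mem_sdiff.mp hσ).2 (Finset.mem_singleton.mpr (Equiv.ext h))
  rw [hsign, hsign]
  change _ < v (∏ i, N i i)
  have hle (k : n) : v (N (σ k) k) ≤ 1 := by
    rcases eq_or_ne (σ k) k with h | h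
    · rw [h, hdiag]
    · exact (hoff _ _ h).le
  calc v (∏ k, N (σ k) k) = v (N (σ i) i) * ∏ k ∈ Finset.univ.erase i, v (N (σ k) k) := by
        rw [map_prod]
        exact (Finset.mul_prod_erase _ (fun k => v (N (σ k) k)) (Finset.mem_univ i)).symm
    _ < 1 := mul_lt_one_of_lt_of_le (hoff _ _ hi) (Finset.prod_le_one' fun k _ => hle k)
    _ = v (∏ i, N i i) := hid.symm

end CommRing

section Field

variable {K Γ₀ : Type*} [Field K] [LinearOrderedCommGroupWithZero Γ₀] (v : Valuation K Γ₀)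
  {n : Type*} [Fintype n] [DecidableEq n]

theorem map_inv_apply_le_one {N : Matrix n n K} (hdiag : ∀ i, v (N i i) = 1)
    (hoff : ∀ i j, i ≠ j → v (N i j) < 1) (i j : n) : v (N⁻¹ i j) ≤ 1 := by
  have hN (k l : n) : v (N k l) ≤ 1 := by
    rcases eq_or_ne k l with rfl | h
    · exact (hdiag k).le
    · exact (hoff k l h).le
  rw [inv_def, Ring.inverse_eq_inv', Matrix.smul_apply, smul_eq_mul, map_mul, map_inv₀,
    v.map_det_eq_one hdiag hoff, inv_one, one_mul]
  exact v.map_adjugate_apply_le_one hN i j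

theorem isUnit_sub_smul_one_and_map_inv_apply_le (M : Matrix n n K) {t : K}
    (hM : ∀ i j, v (M i j) ≤ 1) (ht : 1 < v t) :
    IsUnit (M - t • 1) ∧ ∀ i j, v ((M - t • 1)⁻¹ i j) ≤ (v t)⁻¹ := by
  have ht0 : t ≠ 0 := by
    rintro rfl
    simp at ht
  have hsmall (i j : n) : v (t⁻¹ * M i j) < 1 :=
    calc v (t⁻¹ * M i j) = (v t)⁻¹ * v (M i j) := by rw [map_mul, map_inv₀]
      _ ≤ (v t)⁻¹ := mul_le_of_le_one_right' (hM i j)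
      _ < 1 := inv_lt_one_of_one_lt₀ ht
  set N := 1 - t⁻¹ • M with hN
  have hA : M - t • 1 = (-t) • N := by
    rw [hN, smul_sub, smul_smul, neg_mul, mul_inv_cancel₀ ht0]
    module
  have hdiag (i : n) : v (N i i) = 1 := by
    simpa [hN] using v.map_one_sub_of_lt (hsmall i i)
  have hoff (i j : n) (hij : i ≠ j) : v (N i j) < 1 := by
    simpa [hN, one_apply_ne hij] using hsmall i j
  have hdetN : IsUnit N.det := by
    refine isUnit_iff_ne_zero.mpr fun h => ?_
    simpa [h] using v.map_det_eq_one hdiag hoff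
  refine ⟨?_, fun i j => ?_⟩
  · rw [hA, isUnit_iff_isUnit_det, det_smul]
    exact ((isUnit_iff_ne_zero.mpr (neg_ne_zero.mpr ht0)).pow _).mul hdetN
  · have := invertibleOfNonzero (neg_ne_zero.mpr ht0)
    rw [hA, N.inv_smul _ hdetN, invOf_eq_inv, Matrix.smul_apply, smul_eq_mul, map_mul, map_inv₀,
      map_neg]
    exact mul_le_of_le_one_right' (v.map_inv_apply_le_one hdiag hoff i j)

end Field

end Valuation

theorem RatFunc.inftyValuation_le_one_iff {F : Type*} [Field F] [DecidableEq (RatFunc F)]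
    {w : RatFunc F} : inftyValuation F w ≤ 1 ↔ w.intDegree ≤ 0 := by
  rcases eq_or_ne w 0 with rfl | hw
  · simp [inftyValuation_apply, inftyValuationDef]
  · rw [inftyValuation_apply, inftyValuation_of_nonzero _ hw, ← WithZero.exp_zero,
      WithZero.exp_le_exp]

theorem isUnit_sub_X_smul_one_and_intDegree_inv_le_zero
    {n : ℕ} (M : Matrix (Fin n) (Fin n) (RatFunc ℂ))
    (hdeg : ∀ i j, (M i j).intDegree ≤ 0) :
    IsUnit (M - (RatFunc.X : RatFunc ℂ) • 1) ∧
    ∀ i j, (((M - (RatFunc.X : RatFunc ℂ) • 1)⁻¹) i j).intDegree ≤ 0 := by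
  classical
  have hX : 1 < RatFunc.inftyValuation ℂ RatFunc.X := by
    rw [RatFunc.inftyValuation.X, ← WithZero.exp_zero, WithZero.exp_lt_exp]
    exact zero_lt_one
  obtain ⟨hunit, hinv⟩ := (RatFunc.inftyValuation ℂ).isUnit_sub_smul_one_and_map_inv_apply_le M
    (fun i j => RatFunc.inftyValuation_le_one_iff.mpr (hdeg i j)) hX
  exact ⟨hunit, fun i j => RatFunc.inftyValuation_le_one_iff.mp
    ((hinv i j).trans (inv_le_one_of_one_le₀ hX.le))⟩
end

section
/- Let M be an n×n matrix over RatFunc ℂ and let λ₀ ∈ ℂ be a root of the denominator (det (M - X • 1)).denom. Then there exist indices i, j such that (M i j).denom.eval λ₀ = 0; that is, every inverse eigenvalue of M lies outside the domain of M. -/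
set_option synthInstance.maxHeartbeats 1000000
set_option maxHeartbeats 1000000

open Matrix Polynomial

theorem invSpec_subset_compl_dom {n : ℕ}
    (M : Matrix (Fin n) (Fin n) (RatFunc ℂ)) (lam : ℂ)
    (h : (((M - (RatFunc.X : RatFunc ℂ) • 1).det).denom).eval lam = 0) :
    ∃ i j, ((M i j).denom).eval lam = 0 := by
  by_contra hc
  push_neg at hc
  -- the subring of rational functions defined at lam
  have hdvd : ∀ a b : RatFunc ℂ, a.denom.eval lam ≠ 0 → b.denom.eval lam ≠ 0 →
      ∀ c : RatFunc ℂ, c.denom ∣ a.denom * b.denom → c.denom.eval lam ≠ 0 := by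
    intro a b ha hb c hdvd h0
    have := Polynomial.eval_eq_zero_of_dvd_of_eval_eq_zero hdvd h0
    rw [Polynomial.eval_mul, mul_eq_zero] at this
    tauto
  let S : Subring (RatFunc ℂ) :=
    { carrier := {w : RatFunc ℂ | w.denom.eval lam ≠ 0}
      zero_mem' := by simp [RatFunc.denom_zero]
      one_mem' := by simp [RatFunc.denom_one]
      add_mem' := fun {a b} ha hb =>
        hdvd a b ha hb _ (RatFunc.denom_add_dvd a b)
      mul_mem' := fun {a b} ha hb =>
        hdvd a b ha hb _ (RatFunc.denom_mul_dvd a b)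
      neg_mem' := fun {a} ha => by
        have h1 : ((-1 : RatFunc ℂ)).denom.eval lam ≠ 0 := by
          have : (-1 : RatFunc ℂ) = algebraMap (Polynomial ℂ) (RatFunc ℂ) (-1) := by
            simp
          rw [this, RatFunc.denom_algebraMap]
          simp
        have := hdvd _ a h1 ha ((-1) * a) (RatFunc.denom_mul_dvd (-1) a)
        simpa using this }
  have hX : (RatFunc.X : RatFunc ℂ) ∈ S := by
    show (RatFunc.X : RatFunc ℂ).denom.eval lam ≠ 0
    have : (RatFunc.X : RatFunc ℂ) = algebraMap (Polynomial ℂ) (RatFunc ℂ) Polynomial.X := by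
      simp [RatFunc.algebraMap_X]
    rw [this, RatFunc.denom_algebraMap]
    simp
  have hmem : ∀ i j, (M - (RatFunc.X : RatFunc ℂ) • 1) i j ∈ S := by
    intro i j
    have hM : M i j ∈ S := hc i j
    have h1 : ((RatFunc.X : RatFunc ℂ) • (1 : Matrix (Fin n) (Fin n) (RatFunc ℂ))) i j ∈ S := by
      simp only [Matrix.smul_apply, Matrix.one_apply, smul_ite, smul_eq_mul, mul_one, smul_zero]
      split
      · simpa using hX
      · simpa using S.zero_mem
    simpa using S.sub_mem hM h1
  let N : Matrix (Fin n) (Fin n) S := fun i j => ⟨_, hmem i j⟩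
  have hmap : N.map (S.subtype) = M - (RatFunc.X : RatFunc ℂ) • 1 := by
    ext i j; rfl
  have hdet : (M - (RatFunc.X : RatFunc ℂ) • 1).det ∈ S := by
    rw [← hmap, show N.map ⇑S.subtype = S.subtype.mapMatrix N from rfl, ← RingHom.map_det]
    exact (N.det).2
  exact hdet h
end
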